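/- arXiv:math/9802026 — 2 statements merged into one kernel-verified Lean document; each statement's English description precedes it below -/
import Mathlib

section
/- (Augmentation property) Let q ≥ 0 and let b be a finite sequence of 0's and 1's with k 1's and l 0's, where l > qk and the last entry of b is a 0. Let b' be obtained from b by inserting one additional 0 at any position. Then the number of q-good 0-prefixes of b' (prefixes ending at a 0 in which the number of 0's strictly exceeds q times the number of 1's) is strictly greater than the number of q-good 0-prefixes of b. -/
/-- The number of `q`-good 0-prefixes of the sequence `w`: nonempty prefixes whose
last entry is 0 (`false`) and in which the number of 0's strictly exceeds `q` times
the number of 1's. -/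
def goodPrefixCount (q : ℕ) (w : List Bool) : ℕ :=
  ((Finset.Icc 1 w.length).filter (fun m =>
    w.getD (m - 1) true = false ∧
      q * (w.take m).count true < (w.take m).count false)).card

/-- (Augmentation property) Let `b` be a sequence of 0's and 1's with `k` 1's and
`l` 0's, where `l > qk` and the last entry of `b` is a 0. If `b'` is obtained from `b`
by inserting one additional 0 at any position, then `b'` has strictly more `q`-good
0-prefixes than `b`. -/
theorem augmentation_property (q k l : ℕ) (b : List Bool)
    (hones : b.count true = k) (hzeros : b.count false = l) (hql : q * k < l)
    (hlast : b.getLast? = some false) :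
    ∀ m : ℕ, m ≤ b.length →
      goodPrefixCount q b < goodPrefixCount q (b.take m ++ false :: b.drop m) := by
  intro m hm
  classical
  set b' : List Bool := b.take m ++ false :: b.drop m with hb'def
  have hmlen : (b.take m).length = m := by simp [hm]
  have hb'len : b'.length = b.length + 1 := by
    simp [hb'def]; omega
  -- prefixes of b' before the insertion point agree with those of b
  have htake_le : ∀ i, i ≤ m → b'.take i = b.take i := by
    intro i hi
    rw [hb'def, List.take_append, hmlen,
      Nat.sub_eq_zero_of_le hi, List.take_take, Nat.min_eq_left hi]
    simp
  -- prefixes of b' past the insertion point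
  have htake_gt : ∀ i, m ≤ i →
      b'.take (i + 1) = b.take m ++ false :: (b.drop m).take (i - m) := by
    intro i hi
    rw [hb'def, List.take_append, hmlen]
    have h1 : i + 1 - m = (i - m) + 1 := by omega
    rw [h1, List.take_succ_cons, List.take_take, Nat.min_eq_right (by omega)]
  have htake_split : ∀ i, m ≤ i → b.take i = b.take m ++ (b.drop m).take (i - m) := by
    intro i hi
    conv_lhs => rw [← List.take_append_drop m b]
    rw [List.take_append, hmlen, List.take_take,
      Nat.min_eq_right hi]
  have hcount_gt : ∀ i, m ≤ i →
      (b'.take (i + 1)).count true = (b.take i).count true ∧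
      (b'.take (i + 1)).count false = (b.take i).count false + 1 := by
    intro i hi
    rw [htake_gt i hi, htake_split i hi]
    constructor <;> simp [List.count_append, List.count_cons] <;> omega
  -- entries of b'
  have hget_lt : ∀ j, j < m → b'[j]? = b[j]? := by
    intro j hj
    rw [hb'def, List.getElem?_append_left (by omega : j < (b.take m).length),
      List.getElem?_take, if_pos hj]
  have hget_m : b'[m]? = some false := by
    rw [hb'def, List.getElem?_append_right (by omega : (b.take m).length ≤ m)]
    simp [hmlen]
  have hget_ge : ∀ j, m ≤ j → b'[j + 1]? = b[j]? := by
    intro j hj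
    rw [hb'def, List.getElem?_append_right (by omega : (b.take m).length ≤ j + 1),
      hmlen]
    have h1 : j + 1 - m = (j - m) + 1 := by omega
    rw [h1, List.getElem?_cons_succ, List.getElem?_drop]
    congr 1
    omega
  -- abbreviations
  set P : List Bool → ℕ → Prop := fun w i =>
    w.getD (i - 1) true = false ∧
      q * (w.take i).count true < (w.take i).count false with hP
  set S : List Bool → Finset ℕ := fun w =>
    (Finset.Icc 1 w.length).filter (fun i => P w i) with hS
  have hgood : ∀ w, goodPrefixCount q w = (S w).card := by
    intro w; rfl
  have hmemS : ∀ w i, i ∈ S w ↔ (1 ≤ i ∧ i ≤ w.length) ∧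
      w[i-1]?.getD true = false ∧
      q * (w.take i).count true < (w.take i).count false := by
    intro w i
    simp [hS, hP, Finset.mem_filter, Finset.mem_Icc, List.getD_eq_getElem?_getD]
  -- the injection
  set φ : ℕ → ℕ := fun i => if i ≤ m then i else i + 1 with hφ
  have hφinj : Function.Injective φ := by
    intro a c h
    simp only [hφ] at h
    split_ifs at h <;> omega
  have himage : ∀ i ∈ S b, φ i ∈ S b' := by
    intro i hi
    rw [hmemS] at hi
    obtain ⟨⟨hi1, hi2⟩, hlastb, hcnt⟩ := hi
    by_cases hle : i ≤ m
    · have hφi : φ i = i := if_pos hle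
      rw [hmemS, hφi]
      refine ⟨⟨hi1, by omega⟩, ?_, ?_⟩
      · rwa [hget_lt (i - 1) (by omega)]
      · rwa [htake_le i hle]
    · have hφi : φ i = i + 1 := if_neg hle
      rw [hmemS, hφi]
      obtain ⟨hct, hcf⟩ := hcount_gt i (by omega)
      refine ⟨⟨by omega, by omega⟩, ?_, ?_⟩
      · have h1 : i + 1 - 1 = (i - 1) + 1 := by omega
        rw [h1, hget_ge (i - 1) (by omega)]
        exact hlastb
      · rw [hct, hcf]; omega
  -- find the new good index
  have hnew : ∃ s, s ∈ S b' ∧ ∀ i ∈ S b, φ i ≠ s := by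
    by_cases h0 : q * (b.take m).count true < (b.take m).count false + 1
    · refine ⟨m + 1, ?_, ?_⟩
      · rw [hmemS]
        obtain ⟨hct, hcf⟩ := hcount_gt m le_rfl
        refine ⟨⟨by omega, by omega⟩, ?_, ?_⟩
        · simp only [Nat.add_sub_cancel]
          rw [hget_m]; rfl
        · rw [hct, hcf]
          omega
      · intro i hi hc
        rw [hmemS] at hi
        simp only [hφ] at hc
        split_ifs at hc <;> omega
    · -- g m ≤ -1; walk forward to first index with g ≥ 0
      push_neg at h0
      set g : ℕ → ℤ := fun i =>
        ((b.take i).count false : ℤ) - q * (b.take i).count true with hg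
      have hgm : g m ≤ -1 := by
        simp only [hg]
        push_cast
        omega
      have hglen : 1 ≤ g b.length := by
        simp only [hg, List.take_length]
        rw [hones, hzeros]
        push_cast
        omega
      have hmlt : m < b.length := by
        rcases Nat.lt_or_ge m b.length with h | h
        · exact h
        · exfalso
          have : m = b.length := le_antisymm hm h
          rw [this] at hgm
          omega
      have hQ : ∃ j, m < j ∧ 0 ≤ g j := ⟨b.length, hmlt, by omega⟩
      obtain ⟨j, ⟨hjm, hjg⟩, hjmin⟩ :
          ∃ j, (m < j ∧ 0 ≤ g j) ∧ ∀ i < j, ¬(m < i ∧ 0 ≤ g i) :=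
        ⟨Nat.find hQ, Nat.find_spec hQ, fun i hi => Nat.find_min hQ hi⟩
      have hjle : j ≤ b.length := by
        by_contra h
        exact (hjmin b.length (by omega)) ⟨hmlt, by omega⟩
      have hprev : g (j - 1) ≤ -1 := by
        rcases Nat.lt_or_ge m (j - 1) with h | h
        · have h2 := hjmin (j - 1) (by omega)
          push_neg at h2
          have := h2 h
          omega
        · have h2 : j - 1 = m := by omega
          rw [h2]; exact hgm
      have hstep : b.take j = b.take (j - 1) ++ (b[j-1]?).toList := by
        conv_lhs => rw [show j = (j - 1) + 1 by omega]
        exact List.take_succ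
      have hjlt : j - 1 < b.length := by omega
      have hgetj : b[j-1]? = some (b[j-1]'hjlt) := List.getElem?_eq_getElem hjlt
      have hfalse : b[j-1]'hjlt = false ∧ g j = 0 := by
        rcases Bool.eq_false_or_eq_true (b[j-1]'hjlt) with hb | hb
        · exfalso
          have hcf : (b.take j).count false = (b.take (j-1)).count false := by
            rw [hstep, hgetj, hb]; simp [List.count_append]
          have hct : (b.take j).count true = (b.take (j-1)).count true + 1 := by
            rw [hstep, hgetj, hb]; simp [List.count_append]
          have hgeq : g j = g (j - 1) - q := by
            simp only [hg]; rw [hcf, hct]; push_cast; ring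
          omega
        · refine ⟨hb, ?_⟩
          have hcf : (b.take j).count false = (b.take (j-1)).count false + 1 := by
            rw [hstep, hgetj, hb]; simp [List.count_append]
          have hct : (b.take j).count true = (b.take (j-1)).count true := by
            rw [hstep, hgetj, hb]; simp [List.count_append]
          have hgeq : g j = g (j - 1) + 1 := by
            simp only [hg]; rw [hcf, hct]; push_cast; ring
          omega
      obtain ⟨hbf, hgj0⟩ := hfalse
      have hgj0' : (b.take j).count false = q * (b.take j).count true := by
        simp only [hg] at hgj0
        have h3 : ((b.take j).count false : ℤ) = ((q * (b.take j).count true : ℕ) : ℤ) := by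
          push_cast; omega
        exact_mod_cast h3
      refine ⟨j + 1, ?_, ?_⟩
      · rw [hmemS]
        obtain ⟨hct, hcf⟩ := hcount_gt j (by omega)
        refine ⟨⟨by omega, by omega⟩, ?_, ?_⟩
        · simp only [Nat.add_sub_cancel]
          have h1 : j = (j - 1) + 1 := by omega
          rw [h1, hget_ge (j - 1) (by omega), hgetj, hbf]
          rfl
        · rw [hct, hcf]
          omega
      · intro i hi hc
        rw [hmemS] at hi
        obtain ⟨⟨hi1, hi2⟩, _, hcnt⟩ := hi
        simp only [hφ] at hc
        split_ifs at hc with hle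
        · omega
        · have : i = j := by omega
          rw [this] at hcnt
          omega
  -- conclude
  obtain ⟨s, hsS, hsim⟩ := hnew
  rw [hgood, hgood]
  have hsub : insert s ((S b).image φ) ⊆ S b' := by
    intro x hx
    rcases Finset.mem_insert.mp hx with hx | hx
    · rwa [hx]
    · obtain ⟨i, hi, hix⟩ := Finset.mem_image.mp hx
      rw [← hix]; exact himage i hi
  have hnotmem : s ∉ (S b).image φ := by
    intro hmem
    obtain ⟨i, hi, hix⟩ := Finset.mem_image.mp hmem
    exact hsim i hi hix
  calc (S b).card = ((S b).image φ).card := (Finset.card_image_of_injective _ hφinj).symm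
    _ < (insert s ((S b).image φ)).card := by
        rw [Finset.card_insert_of_notMem hnotmem]; omega
    _ ≤ (S b').card := Finset.card_le_card hsub
end

section
/- (Generalized Catalan recurrence, Hilton–Pedersen) For integers q ≥ 0 and n ≥ 1, the generalized Catalan numbers C_n^q = (1/(qn+1)) · binom((q+1)n, n) satisfy C_n^q = Σ Π_{i=1}^{q+1} C_{n_i}^q, where the sum runs over all (q+1)-tuples (n_1, …, n_{q+1}) of nonnegative integers with n_1 + ⋯ + n_{q+1} = n − 1, and C_0^q = 1. -/
/-!
The Raney numbers `R_{p,r}(n) = r/(pn+r) · C(pn+r, n)` are the coefficients of `B(x)^r`, where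
`B = 1 + x·B^p`. Hence `R_{p,r} ⋆ R_{p,s} = R_{p,r+s}` under convolution, and comparing
coefficients in `B^(r+1) = B^r + x·B^(p+r)` gives `R_{p,r+1}(n+1) = R_{p,r}(n+1) + R_{p,p+r}(n)`;
the recurrence follows from Pascal's rule and absorption, and the convolution identity from the
recurrence by induction, so no generating functions are needed.
Since `C_n^q = R_{q+1,1}(n)`, the case `r = 0` of the recurrence says `C_{n+1}^q = R_{q+1,q+1}(n)`,
which is the `(q+1)`-fold convolution power of `C^q` evaluated at `n`.
-/

/-- The generalized Catalan number `C_n^q = (1/(qn+1)) · C((q+1)n, n)`. -/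
def genCatalan (q n : ℕ) : ℚ :=
  1 / (q * n + 1) * Nat.choose ((q + 1) * n) n

open Finset

/-- The `n = 0` case is separate because the formula gives `0 / 0 = 0` at `r = n = 0`. -/
def raney (p r n : ℕ) : ℚ :=
  if n = 0 then 1 else r / (p * n + r : ℕ) * (p * n + r).choose n

@[simp]
theorem raney_zero_right (p r : ℕ) : raney p r 0 = 1 := rfl

theorem raney_zero_succ (p n : ℕ) : raney p 0 (n + 1) = 0 := by
  simp [raney]

theorem raney_eq_div {p r n : ℕ} (h : r ≠ 0 ∨ n ≠ 0) :
    raney p r n = r / (p * n + r : ℕ) * (p * n + r).choose n := by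
  unfold raney
  split_ifs with hn
  · subst hn
    have hr : (r : ℚ) ≠ 0 := by exact_mod_cast h.resolve_right (by simp)
    simp [hr]
  · rfl

theorem raney_succ_succ (p r n : ℕ) :
    raney p (r + 1) (n + 1) = raney p r (n + 1) + raney p (p + r) n := by
  rcases Nat.eq_zero_or_pos (p + r) with hpr | hpr
  · obtain ⟨rfl, rfl⟩ : p = 0 ∧ r = 0 := by omega
    cases n <;> simp [raney, Nat.choose_eq_zero_of_lt]
  rw [raney_eq_div (.inr n.succ_ne_zero), raney_eq_div (.inr n.succ_ne_zero),
    raney_eq_div (.inl hpr.ne'), show p * (n + 1) + (r + 1) = p * (n + 1) + r + 1 by ring,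
    show p * n + (p + r) = p * (n + 1) + r by ring]
  obtain ⟨M, hM⟩ : ∃ M, p * (n + 1) + r = M := ⟨_, rfl⟩
  have hM0 : (M : ℚ) ≠ 0 := by exact_mod_cast (show M ≠ 0 by rw [← hM]; nlinarith)
  have pascal : ((M + 1).choose (n + 1) : ℚ) = M.choose n + M.choose (n + 1) := by
    exact_mod_cast Nat.choose_succ_succ' M n
  have absorb : ((M : ℚ) + 1) * M.choose n = (M + 1).choose (n + 1) * (n + 1) := by
    exact_mod_cast Nat.add_one_mul_choose_eq M n
  have hMq : (M : ℚ) = p * (n + 1) + r := by rw [← hM]; push_cast; ring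
  rw [hM]
  rw [pascal] at absorb ⊢
  push_cast
  field_simp
  rw [hMq] at absorb ⊢
  linear_combination (-(p : ℚ)) * absorb

theorem sum_antidiagonal_raney_mul (p n r s : ℕ) :
    ∑ ij ∈ antidiagonal n, raney p r ij.1 * raney p s ij.2 = raney p (r + s) n := by
  induction n generalizing r s with
  | zero => simp
  | succ n ihn =>
    induction r with
    | zero => simp [Nat.sum_antidiagonal_succ, raney_zero_succ]
    | succ r ihr =>
      have hsplit : ∑ ij ∈ antidiagonal n, raney p (r + 1) (ij.1 + 1) * raney p s ij.2 =
          ∑ ij ∈ antidiagonal n, raney p r (ij.1 + 1) * raney p s ij.2 + raney p (p + r + s) n := by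
        simp only [raney_succ_succ, add_mul, sum_add_distrib, ihn]
      rw [Nat.sum_antidiagonal_succ] at ihr ⊢
      rw [hsplit, show r + 1 + s = r + s + 1 by ring, raney_succ_succ, ← ihr, add_assoc p]
      simp only [raney_zero_right, one_mul]
      ring

theorem sum_piAntidiag_prod_raney {ι : Type*} [DecidableEq ι] (p : ℕ) (r : ι → ℕ)
    (s : Finset ι) (n : ℕ) :
    ∑ f ∈ piAntidiag s n, ∏ i ∈ s, raney p (r i) (f i) = raney p (∑ i ∈ s, r i) n := by
  induction s using Finset.cons_induction generalizing n with
  | empty => cases n <;> simp [raney_zero_succ]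
  | cons i s hi ih =>
    rw [piAntidiag_cons, sum_disjiUnion, sum_cons, ← sum_antidiagonal_raney_mul]
    refine sum_congr rfl fun ab _ => ?_
    rw [sum_map, ← ih, mul_sum]
    refine sum_congr rfl fun f hf => ?_
    have hfi : f i = 0 := by
      by_contra h
      exact hi ((mem_piAntidiag.1 hf).2 i h)
    rw [prod_cons]
    simp only [addRightEmbedding_apply, Pi.add_apply, hfi, zero_add]
    congr 1
    refine prod_congr rfl fun j hj => ?_
    rw [if_neg (ne_of_mem_of_not_mem hj hi), add_zero]

theorem genCatalan_eq_raney (q n : ℕ) : genCatalan q n = raney (q + 1) 1 n := by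
  rw [raney_eq_div (.inl one_ne_zero), genCatalan]
  have absorb := Nat.choose_mul_succ_eq ((q + 1) * n) n
  rw [show (q + 1) * n + 1 - n = q * n + 1 by rw [add_one_mul]; omega] at absorb
  have hN : (((q + 1) * n + 1 : ℕ) : ℚ) ≠ 0 := by positivity
  field_simp
  norm_cast
  rw [absorb]
  ring

/-- (Generalized Catalan recurrence, Hilton–Pedersen) For `q ≥ 0` and `n ≥ 1`,
`C_n^q = Σ Π_{i=1}^{q+1} C_{n_i}^q`, where the sum runs over all `(q+1)`-tuples
`(n_1, …, n_{q+1})` of nonnegative integers with `n_1 + ⋯ + n_{q+1} = n − 1`. -/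
theorem genCatalan_recurrence (q n : ℕ) (hn : 1 ≤ n) :
    genCatalan q n =
      ∑ f ∈ Finset.Nat.antidiagonalTuple (q + 1) (n - 1), ∏ i, genCatalan q (f i) := by
  obtain ⟨m, rfl⟩ : ∃ m, n = m + 1 := ⟨n - 1, by omega⟩
  simp only [genCatalan_eq_raney, Nat.add_sub_cancel, ← piAntidiag_univ_fin_eq_antidiagonalTuple,
    sum_piAntidiag_prod_raney, sum_const, card_univ, Fintype.card_fin, smul_eq_mul, mul_one]
  simpa [raney_zero_succ, add_comm] using raney_succ_succ (q + 1) 0 m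
end
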